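/- arXiv:math/0406416 — 2 statements merged into one kernel-verified Lean document; each statement's English description precedes it below -/
import Mathlib

section
/- Let γ₁ and γ₂ be irrational numbers in (0,1) whose continued fraction expansions [a_1, a_2, …] coincide in the first M−1 partial quotients. Let α_i(γ) denote the i-th Gauss iterate of γ (so α_i(γ) = [a_i, a_{i+1}, …]). Then for every i < M, |log(α_i(γ₁)/α_i(γ₂))| < 2^{i−M+1}. -/
/-!
If `x₁, x₂ ∈ (0,1)` have the same first partial quotient `a ≥ 1`, then `xⱼ = 1 / (a + yⱼ)` with
`yⱼ` the next Gauss iterates, so `x₁ / x₂ = (a + y₂) / (a + y₁)`. In logarithmic coordinates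
`t ↦ log (a + exp t)` has slope `exp t / (a + exp t) ≤ 1/2` as long as `exp t ≤ a`, so one step of
the Gauss map backwards halves `|log (x₁ / x₂)|`. At the last agreeing index the ratio lies in
`(1/2, 2)`, so `|log| < 1` there, and halving `M - 1 - i` times gives the bound.
-/

open Real Set

lemma abs_log_div_comm (x y : ℝ) : |log (x / y)| = |log (y / x)| := by
  rw [← inv_div y x, log_inv, abs_neg]

lemma abs_log_add_div_add_le_half {a x y : ℝ} (ha : 0 < a) (hx : 0 < x) (hy : 0 < y)
    (hxy : x * y ≤ a ^ 2) :
    |log ((a + x) / (a + y))| ≤ |log (x / y)| / 2 := by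
  wlog h : x ≤ y generalizing x y
  · rw [abs_log_div_comm, abs_log_div_comm x]
    exact this hy hx (by linarith) (le_of_not_ge h)
  -- equivalent to `(y - x) * (a ^ 2 - x * y) ≥ 0`
  have hsq : ((a + y) / (a + x)) ^ 2 ≤ y / x := by
    rw [div_pow, div_le_div_iff₀ (by positivity) hx]
    nlinarith [mul_nonneg (sub_nonneg.2 h) (sub_nonneg.2 hxy)]
  have hlog := log_le_log (by positivity) hsq
  rw [log_pow, Nat.cast_ofNat] at hlog
  rw [abs_log_div_comm, abs_of_nonneg (log_nonneg ((one_le_div (by linarith)).2 (by linarith))),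
    abs_log_div_comm, abs_of_nonneg (log_nonneg ((one_le_div hx).2 h))]
  linarith

lemma abs_log_add_div_add_lt_one {a x y : ℝ} (ha : 1 ≤ a) (hx : x ∈ Ico 0 1) (hy : y ∈ Ico 0 1) :
    |log ((a + x) / (a + y))| < 1 := by
  wlog h : x ≤ y generalizing x y
  · rw [abs_log_div_comm]
    exact this hy hx (le_of_not_ge h)
  have hax : 0 < a + x := by linarith [hx.1]
  rw [abs_log_div_comm, abs_of_nonneg (log_nonneg ((one_le_div hax).2 (by linarith)))]
  calc log ((a + y) / (a + x)) ≤ (a + y) / (a + x) - 1 :=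
        log_le_sub_one_of_pos (div_pos (by linarith [hy.1]) hax)
    _ < 1 := by
      rw [sub_lt_iff_lt_add, div_lt_iff₀ hax]
      linarith [hx.1, hy.2]

lemma eq_one_div_floor_add_fract (x : ℝ) :
    x = 1 / (⌊1 / x⌋ + Int.fract (1 / x)) := by
  rw [Int.floor_add_fract, one_div_one_div]

lemma abs_log_div_le_half_of_floor_one_div_eq {x₁ x₂ : ℝ} (h₂ : x₂ ∈ Ioc 0 1)
    (hfloor : ⌊1 / x₁⌋ = ⌊1 / x₂⌋) (hf₁ : 0 < Int.fract (1 / x₁)) (hf₂ : 0 < Int.fract (1 / x₂)) :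
    |log (x₁ / x₂)| ≤ |log (Int.fract (1 / x₁) / Int.fract (1 / x₂))| / 2 ∧
      |log (x₁ / x₂)| < 1 := by
  have ha : (1 : ℝ) ≤ ⌊1 / x₂⌋ := by
    exact_mod_cast Int.floor_pos.2 (one_le_one_div h₂.1 h₂.2)
  have hratio : x₁ / x₂ =
      (⌊1 / x₂⌋ + Int.fract (1 / x₂)) / (⌊1 / x₂⌋ + Int.fract (1 / x₁)) := by
    have e₁ : x₁ = (⌊1 / x₂⌋ + Int.fract (1 / x₁))⁻¹ := by
      rw [← hfloor, ← one_div, ← eq_one_div_floor_add_fract]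
    have e₂ : x₂ = (⌊1 / x₂⌋ + Int.fract (1 / x₂))⁻¹ := by
      rw [← one_div, ← eq_one_div_floor_add_fract]
    calc x₁ / x₂ = (⌊1 / x₂⌋ + Int.fract (1 / x₁))⁻¹ / (⌊1 / x₂⌋ + Int.fract (1 / x₂))⁻¹ := by
          rw [← e₁, ← e₂]
      _ = _ := inv_div_inv _ _
  rw [hratio, abs_log_div_comm (Int.fract _)]
  refine ⟨abs_log_add_div_add_le_half (by linarith) hf₂ hf₁ ?_, abs_log_add_div_add_lt_one ha
    ⟨hf₂.le, Int.fract_lt_one _⟩ ⟨hf₁.le, Int.fract_lt_one _⟩⟩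
  nlinarith [Int.fract_lt_one (1 / x₁), Int.fract_lt_one (1 / x₂)]

lemma Irrational.fract {x : ℝ} (h : Irrational x) : Irrational (Int.fract x) :=
  h.sub_intCast _

lemma Irrational.fract_pos {x : ℝ} (h : Irrational x) : 0 < Int.fract x :=
  Int.fract_pos.2 (h.ne_int _)

lemma gauss_iterate_mem_Ioo_irrational {A : ℕ → ℝ} (h1 : A 1 ∈ Ioo 0 1) (hirr : Irrational (A 1))
    (hrec : ∀ i, 1 ≤ i → A (i + 1) = Int.fract (1 / A i)) ⦃i : ℕ⦄ (hi : 1 ≤ i) :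
    A i ∈ Ioo 0 1 ∧ Irrational (A i) := by
  induction i, hi using Nat.le_induction with
  | base => exact ⟨h1, hirr⟩
  | succ i hi ih =>
    have hinv : Irrational (1 / A i) := by
      rw [one_div]
      exact ih.2.inv
    rw [hrec i hi]
    exact ⟨⟨hinv.fract_pos, Int.fract_lt_one _⟩, hinv.fract⟩

lemma lt_two_zpow_of_le_half {d : ℕ → ℝ} {m N : ℕ}
    (hstep : ∀ i, m ≤ i → i < N → d i ≤ d (i + 1) / 2) (htop : d N < 1)
    {i : ℕ} (hmi : m ≤ i) (hiN : i ≤ N) : d i < 2 ^ ((i : ℤ) - N) := by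
  induction hiN using Nat.decreasingInduction with
  | self => simpa using htop
  | of_succ k hk ih =>
    calc d k ≤ d (k + 1) / 2 := hstep k hmi hk
      _ < 2 ^ (((k + 1 : ℕ) : ℤ) - N) / 2 := by gcongr; exact ih (by omega)
      _ = 2 ^ ((k : ℤ) - N) := by
        rw [Nat.cast_succ, add_sub_right_comm, zpow_add_one₀ two_ne_zero,
          mul_div_cancel_right₀ _ two_ne_zero]

theorem stmt7 (γ₁ γ₂ : ℝ) (hγ₁ : γ₁ ∈ Set.Ioo (0 : ℝ) 1) (hγ₂ : γ₂ ∈ Set.Ioo (0 : ℝ) 1)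
    (hirr₁ : Irrational γ₁) (hirr₂ : Irrational γ₂)
    (M : ℕ) (A₁ A₂ : ℕ → ℝ) (hA₁1 : A₁ 1 = γ₁) (hA₂1 : A₂ 1 = γ₂)
    (hrec₁ : ∀ i, 1 ≤ i → A₁ (i + 1) = Int.fract (1 / A₁ i))
    (hrec₂ : ∀ i, 1 ≤ i → A₂ (i + 1) = Int.fract (1 / A₂ i))
    (hagree : ∀ i, 1 ≤ i → i ≤ M - 1 → ⌊1 / A₁ i⌋ = ⌊1 / A₂ i⌋) :
    ∀ i, 1 ≤ i → i < M →
      |Real.log (A₁ i / A₂ i)| < (2 : ℝ) ^ ((i : ℤ) - M + 1) := by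
  intro i hi hiM
  have hA₁ := gauss_iterate_mem_Ioo_irrational (hA₁1 ▸ hγ₁) (hA₁1 ▸ hirr₁) hrec₁
  have hA₂ := gauss_iterate_mem_Ioo_irrational (hA₂1 ▸ hγ₂) (hA₂1 ▸ hirr₂) hrec₂
  have hstep : ∀ j, 1 ≤ j → j ≤ M - 1 →
      |log (A₁ j / A₂ j)| ≤ |log (A₁ (j + 1) / A₂ (j + 1))| / 2 ∧ |log (A₁ j / A₂ j)| < 1 := by
    intro j hj hjM
    have hf₁ := (hA₁ (by omega : 1 ≤ j + 1)).1.1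
    have hf₂ := (hA₂ (by omega : 1 ≤ j + 1)).1.1
    rw [hrec₁ j hj] at hf₁ ⊢
    rw [hrec₂ j hj] at hf₂ ⊢
    exact abs_log_div_le_half_of_floor_one_div_eq (Ioo_subset_Ioc_self (hA₂ hj).1)
      (hagree j hj hjM) hf₁ hf₂
  have hbound := lt_two_zpow_of_le_half (d := fun j => |log (A₁ j / A₂ j)|)
    (fun j hj hjM => (hstep j hj hjM.le).1) (hstep (M - 1) (by omega) le_rfl).2 hi
    (Nat.le_sub_one_of_lt hiM)
  rwa [Nat.cast_sub (by omega), Nat.cast_one, ← sub_add] at hbound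
end

section
/- Let θ ∈ (0,1) be irrational with Gauss iterates θ_1 = θ, θ_{n+1} = {1/θ_n}, and convergent denominators q_n. Then the Brjuno sum B(θ) = Σ_n log(q_{n+1})/q_n is finite if and only if the Yoccoz–Brjuno sum Φ(θ) = Σ_{n≥1} θ_1 θ_2 ⋯ θ_{n−1} log(1/θ_n) is finite. -/
/-!
With `β_n = θ_1 ⋯ θ_n`, the quantity `q_{n+1} β_{n+1} + q_n β_{n+2}` is invariant under the
three-term recurrences `q_{n+2} = r_{n+2} q_{n+1} + q_n` and
`β_{n+3} = β_{n+1} - r_{n+2} β_{n+2}`, hence equals `θ`; as `q` is monotone and `β` antitone,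
`θ / 2 ≤ q_{n+1} β_{n+1} ≤ θ`. Then `log (1 / θ_{n+2}) = log (1 / β_{n+2}) - log (1 / β_{n+1})`
and `log (1 / β_n) = log q_n + O(1)`, so each series is bounded termwise by a constant multiple
of the other plus `O((1 + log q_n) / q_n)`, which is summable because `q_{n+2} ≥ 2 q_n`.
-/

open Real Finset

theorem Summable.of_two_step_le_mul {u : ℕ → ℝ} {ρ : ℝ} (hu : ∀ n, 0 ≤ u n) (hρ0 : 0 ≤ ρ)
    (hρ1 : ρ < 1) (h : ∀ n, u (n + 2) ≤ ρ * u n) : Summable u := by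
  have hgeom : ∀ i k, u (2 * k + i) ≤ u i * ρ ^ k := by
    intro i k
    induction k with
    | zero => simp
    | succ k ih =>
      calc u (2 * (k + 1) + i) = u (2 * k + i + 2) := by ring_nf
        _ ≤ ρ * (u i * ρ ^ k) := (h _).trans (by gcongr)
        _ = u i * ρ ^ (k + 1) := by ring
  have hsub : ∀ i, Summable fun k => u (2 * k + i) := fun i =>
    .of_nonneg_of_le (fun _ => hu _) (hgeom i)
      ((summable_geometric_of_lt_one hρ0 hρ1).mul_left (u i))
  exact .even_add_odd (hsub 0) (hsub 1)

theorem summable_iff_of_le_mul_add {a b e₁ e₂ : ℕ → ℝ} {C₁ C₂ : ℝ} (ha : ∀ n, 0 ≤ a n)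
    (hb : ∀ n, 0 ≤ b n) (he₁ : Summable e₁) (he₂ : Summable e₂)
    (hab : ∀ n, a n ≤ C₁ * b n + e₁ n) (hba : ∀ n, b n ≤ C₂ * a n + e₂ n) :
    Summable a ↔ Summable b :=
  ⟨fun h => .of_nonneg_of_le hb hba ((h.mul_left C₂).add he₂),
    fun h => .of_nonneg_of_le ha hab ((h.mul_left C₁).add he₁)⟩

theorem Real.log_div_self_le_two_mul_inv_sqrt {x : ℝ} (hx : 0 < x) :
    log x / x ≤ 2 * (√x)⁻¹ := by
  have hlog := log_le_rpow_div hx.le one_half_pos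
  rw [← sqrt_eq_rpow] at hlog
  have hs : 0 < √x := sqrt_pos.2 hx
  rw [div_le_iff₀ hx]
  calc log x ≤ 2 * √x := by linarith
    _ = 2 * (√x)⁻¹ * x := by field_simp; rw [sq_sqrt hx.le]

theorem summable_inv_sqrt_of_two_mul_le {Q : ℕ → ℝ} (hQ : ∀ n, 0 < Q n)
    (hgrowth : ∀ n, 2 * Q n ≤ Q (n + 2)) : Summable fun n => (√(Q n))⁻¹ := by
  refine .of_two_step_le_mul (ρ := (√2)⁻¹) (fun n => by positivity) (by positivity)
    (inv_lt_one_of_one_lt₀ (by simp [lt_sqrt])) fun n => ?_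
  rw [← mul_inv, ← sqrt_mul zero_le_two]
  have := hQ n
  gcongr
  exact hgrowth n

theorem summable_inv_of_two_mul_le {Q : ℕ → ℝ} (hQ : ∀ n, 1 ≤ Q n)
    (hgrowth : ∀ n, 2 * Q n ≤ Q (n + 2)) : Summable fun n => (Q n)⁻¹ := by
  have hQ0 n : 0 < Q n := one_pos.trans_le (hQ n)
  refine .of_nonneg_of_le (fun n => (inv_pos.2 (hQ0 n)).le) (fun n => ?_)
    (summable_inv_sqrt_of_two_mul_le hQ0 hgrowth)
  exact inv_anti₀ (sqrt_pos.2 (hQ0 n)) (sqrt_le_self_iff.2 (.inr (hQ n)))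

theorem summable_log_div_self_of_two_mul_le {Q : ℕ → ℝ} (hQ : ∀ n, 1 ≤ Q n)
    (hgrowth : ∀ n, 2 * Q n ≤ Q (n + 2)) : Summable fun n => log (Q n) / Q n := by
  have hQ0 n : 0 < Q n := one_pos.trans_le (hQ n)
  exact .of_nonneg_of_le (fun n => div_nonneg (log_nonneg (hQ n)) (hQ0 n).le)
    (fun n => log_div_self_le_two_mul_inv_sqrt (hQ0 n))
    ((summable_inv_sqrt_of_two_mul_le hQ0 hgrowth).mul_left 2)

theorem Real.log_le_log_inv_of_mul_le_one {x y : ℝ} (hx : 0 < x) (hy : 0 < y) (h : x * y ≤ 1) :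
    log x ≤ log y⁻¹ :=
  log_le_log hx (by rwa [← one_div, le_div_iff₀ hy])

theorem Real.log_inv_le_log_add_log_inv_of_le_mul {x y c : ℝ} (hx : 0 < x) (hy : 0 < y)
    (hc : 0 < c) (h : c ≤ x * y) : log y⁻¹ ≤ log x + log c⁻¹ := by
  rw [← log_mul hx.ne' (inv_pos.2 hc).ne']
  refine log_le_log (inv_pos.2 hy) ?_
  rw [← div_eq_mul_inv, le_div_iff₀ hc, inv_mul_le_iff₀ hy]
  linarith

section TermwiseBounds

variable {Q Q' β β' c : ℝ}

theorem mul_log_div_le (hQ : 1 ≤ Q) (hβ : 0 < β) (hupper : Q * β ≤ 1) (hQ' : 1 ≤ Q')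
    (hβ' : 0 < β') (hupper' : Q' * β' ≤ 1) (hc : 0 < c) (hlower' : c ≤ Q' * β') :
    β * log (β / β') ≤ log Q' / Q + log c⁻¹ / Q := by
  have hQ0 : 0 < Q := one_pos.trans_le hQ
  have hlogβ : 0 ≤ log β⁻¹ :=
    (log_nonneg hQ).trans (log_le_log_inv_of_mul_le_one hQ0 hβ hupper)
  have hlogβ' : 0 ≤ log β'⁻¹ :=
    (log_nonneg hQ').trans (log_le_log_inv_of_mul_le_one (one_pos.trans_le hQ') hβ' hupper')
  have hβ_le : β ≤ Q⁻¹ := by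
    rw [← one_div, le_div_iff₀ hQ0]
    linarith
  rw [log_inv] at hlogβ
  calc β * log (β / β') ≤ β * log β'⁻¹ := by
        rw [log_div hβ.ne' hβ'.ne', log_inv]
        exact mul_le_mul_of_nonneg_left (by linarith) hβ.le
    _ ≤ Q⁻¹ * (log Q' + log c⁻¹) :=
        mul_le_mul hβ_le (log_inv_le_log_add_log_inv_of_le_mul (one_pos.trans_le hQ') hβ' hc
          hlower') hlogβ' (inv_pos.2 hQ0).le
    _ = log Q' / Q + log c⁻¹ / Q := by ring

theorem log_div_le (hQ : 1 ≤ Q) (hβ : 0 < β) (hupper : Q * β ≤ 1) (hQ' : 1 ≤ Q')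
    (hβ' : 0 < β') (hupper' : Q' * β' ≤ 1) (hc : 0 < c) (hlower : c ≤ Q * β) :
    log Q' / Q ≤ c⁻¹ * (β * log (β / β')) + c⁻¹ * (log Q / Q + log c⁻¹ / Q) := by
  have hQ0 : 0 < Q := one_pos.trans_le hQ
  have hlogβ : 0 ≤ log β⁻¹ :=
    (log_nonneg hQ).trans (log_le_log_inv_of_mul_le_one hQ0 hβ hupper)
  have hβ_le : β ≤ Q⁻¹ := by
    rw [← one_div, le_div_iff₀ hQ0]
    linarith
  have hinv_le : Q⁻¹ ≤ c⁻¹ * β := by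
    rw [inv_mul_eq_div, le_div_iff₀ hc, inv_mul_le_iff₀ hQ0]
    exact hlower
  have hlogQ' : log Q' ≤ log β'⁻¹ :=
    log_le_log_inv_of_mul_le_one (one_pos.trans_le hQ') hβ' hupper'
  calc log Q' / Q ≤ c⁻¹ * β * log β'⁻¹ := by
        rw [div_eq_inv_mul]
        exact mul_le_mul hinv_le hlogQ' (log_nonneg hQ') (mul_pos (inv_pos.2 hc) hβ).le
    _ = c⁻¹ * (β * log (β / β')) + c⁻¹ * (β * log β⁻¹) := by
        rw [log_div hβ.ne' hβ'.ne', log_inv, log_inv]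
        ring
    _ ≤ c⁻¹ * (β * log (β / β')) + c⁻¹ * (Q⁻¹ * (log Q + log c⁻¹)) := by
        have := mul_le_mul hβ_le (log_inv_le_log_add_log_inv_of_le_mul hQ0 hβ hc hlower) hlogβ
          (inv_pos.2 hQ0).le
        gcongr
    _ = c⁻¹ * (β * log (β / β')) + c⁻¹ * (log Q / Q + log c⁻¹ / Q) := by ring

end TermwiseBounds

theorem summable_log_div_iff_summable_mul_log_div {Q β : ℕ → ℝ} {c : ℝ} (hc : 0 < c)
    (hQ : ∀ n, 1 ≤ Q n) (hgrowth : ∀ n, 2 * Q n ≤ Q (n + 2))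
    (hβ : ∀ n, 0 < β n) (hβ_anti : ∀ n, β (n + 1) ≤ β n)
    (hlower : ∀ n, c ≤ Q n * β n) (hupper : ∀ n, Q n * β n ≤ 1) :
    Summable (fun n => log (Q (n + 1)) / Q n) ↔
      Summable (fun n => β n * log (β n / β (n + 1))) := by
  have hconst : Summable fun n => log c⁻¹ / Q n := by
    simpa only [div_eq_mul_inv] using (summable_inv_of_two_mul_le hQ hgrowth).mul_left (log c⁻¹)
  have hlogQ := summable_log_div_self_of_two_mul_le hQ hgrowth
  refine summable_iff_of_le_mul_add (C₂ := 1) (fun n => ?_) (fun n => ?_)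
    ((hlogQ.add hconst).mul_left c⁻¹) hconst
    (fun n => log_div_le (hQ n) (hβ n) (hupper n) (hQ _) (hβ _) (hupper _) hc (hlower n))
    (fun n => ?_)
  · exact div_nonneg (log_nonneg (hQ _)) (one_pos.trans_le (hQ n)).le
  · exact mul_nonneg (hβ n).le (log_nonneg ((one_le_div (hβ _)).2 (hβ_anti n)))
  · simpa only [one_mul] using
      mul_log_div_le (hQ n) (hβ n) (hupper n) (hQ _) (hβ _) (hupper _) hc (hlower _)

theorem Irrational.int_fract_mem_Ioo {x : ℝ} (hx : Irrational x) : Int.fract x ∈ Set.Ioo 0 1 :=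
  ⟨Int.fract_pos.2 (hx.ne_int _), Int.fract_lt_one x⟩

theorem Int.fract_eq_self_sub_natFloor {x : ℝ} (hx : 0 ≤ x) : Int.fract x = x - ⌊x⌋₊ := by
  rw [natCast_floor_eq_intCast_floor hx]; rfl

theorem cross_sum_eq_of_recurrence {R : Type*} [CommRing R] {q P r : ℕ → R}
    (hq : ∀ n, q (n + 2) = r (n + 2) * q (n + 1) + q n)
    (hP : ∀ n, P (n + 3) = P (n + 1) - r (n + 2) * P (n + 2)) (n : ℕ) :
    q (n + 1) * P (n + 1) + q n * P (n + 2) = q 1 * P 1 + q 0 * P 2 := by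
  induction n with
  | zero => rfl
  | succ n ih =>
    rw [hq, hP]
    linear_combination ih

section Denominators

variable {q r : ℕ → ℕ}

theorem monotone_of_recurrence (hq0 : q 0 = 0)
    (hqrec : ∀ n, q (n + 2) = r (n + 2) * q (n + 1) + q n) (hr : ∀ n, 1 ≤ r (n + 2)) :
    Monotone q := by
  refine monotone_nat_of_le_succ fun n => ?_
  cases n with
  | zero => simp [hq0]
  | succ n => rw [hqrec]; nlinarith [hr n]

theorem two_mul_le_of_recurrence (hq0 : q 0 = 0)
    (hqrec : ∀ n, q (n + 2) = r (n + 2) * q (n + 1) + q n) (hr : ∀ n, 1 ≤ r (n + 2)) (n : ℕ) :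
    2 * q (n + 1) ≤ q (n + 3) := by
  have := monotone_of_recurrence hq0 hqrec hr (Nat.le_succ (n + 1))
  rw [hqrec]
  nlinarith [hr (n + 1)]

end Denominators

section GaussMap

variable {θ : ℝ} {t : ℕ → ℝ} {r q : ℕ → ℕ}

theorem irrational_gauss_iterate (hirr : Irrational θ) (ht1 : t 1 = θ)
    (htrec : ∀ n, 1 ≤ n → t (n + 1) = Int.fract (1 / t n)) (n : ℕ) : Irrational (t (n + 1)) := by
  induction n with
  | zero => rwa [ht1]
  | succ n ih =>
    rw [htrec _ n.succ_pos, one_div]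
    exact ih.inv.sub_intCast _

theorem gauss_iterate_mem_Ioo (hθ : θ ∈ Set.Ioo 0 1) (hirr : Irrational θ) (ht1 : t 1 = θ)
    (htrec : ∀ n, 1 ≤ n → t (n + 1) = Int.fract (1 / t n)) (n : ℕ) :
    t (n + 1) ∈ Set.Ioo 0 1 := by
  cases n with
  | zero => rwa [ht1]
  | succ n =>
    rw [htrec _ n.succ_pos, one_div]
    exact (irrational_gauss_iterate hirr ht1 htrec n).inv.int_fract_mem_Ioo

theorem one_le_partial_quotient (ht : ∀ n, t (n + 1) ∈ Set.Ioo 0 1)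
    (hr : ∀ n, 1 ≤ n → r n = ⌊1 / t n⌋₊) (n : ℕ) : 1 ≤ r (n + 1) := by
  rw [hr _ n.succ_pos, Nat.one_le_floor_iff]
  exact one_le_one_div (ht n).1 (ht n).2.le

theorem gauss_iterate_succ_eq (ht : ∀ n, t (n + 1) ∈ Set.Ioo 0 1)
    (htrec : ∀ n, 1 ≤ n → t (n + 1) = Int.fract (1 / t n))
    (hr : ∀ n, 1 ≤ n → r n = ⌊1 / t n⌋₊) (n : ℕ) : t (n + 2) = 1 / t (n + 1) - r (n + 1) := by
  rw [htrec _ n.succ_pos, hr _ n.succ_pos,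
    Int.fract_eq_self_sub_natFloor (one_div_pos.2 (ht n).1).le]

theorem prod_Icc_one_pos (ht : ∀ n, t (n + 1) ∈ Set.Ioo 0 1) (n : ℕ) :
    0 < ∏ i ∈ Icc 1 n, t i :=
  prod_pos fun i hi => by
    obtain ⟨j, rfl⟩ : ∃ j, i = j + 1 := ⟨i - 1, by grind⟩
    exact (ht j).1

theorem prod_Icc_one_succ_le (ht : ∀ n, t (n + 1) ∈ Set.Ioo 0 1) (n : ℕ) :
    ∏ i ∈ Icc 1 (n + 1), t i ≤ ∏ i ∈ Icc 1 n, t i := by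
  rw [prod_Icc_succ_top (by omega)]
  exact mul_le_of_le_one_right (prod_Icc_one_pos ht n).le (ht n).2.le

theorem prod_Icc_gauss_iterate_eq {a : ℕ → ℝ} (ht : ∀ n, t (n + 1) ≠ 0)
    (hta : ∀ n, t (n + 2) = 1 / t (n + 1) - a (n + 1)) (n : ℕ) :
    ∏ i ∈ Icc 1 (n + 2), t i = ∏ i ∈ Icc 1 n, t i - a (n + 1) * ∏ i ∈ Icc 1 (n + 1), t i := by
  rw [prod_Icc_succ_top (by omega), hta, prod_Icc_succ_top (by omega)]
  field_simp [ht n]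

theorem denom_mul_prod_mem_Icc (ht1 : t 1 = θ) (ht : ∀ n, t (n + 1) ∈ Set.Ioo 0 1)
    (hrt : ∀ n, t (n + 2) = 1 / t (n + 1) - r (n + 1)) (hq0 : q 0 = 0) (hq1 : q 1 = 1)
    (hqrec : ∀ n, q (n + 2) = r (n + 2) * q (n + 1) + q n) (hr : ∀ n, 1 ≤ r (n + 2)) (n : ℕ) :
    q (n + 1) * ∏ i ∈ Icc 1 (n + 1), t i ∈ Set.Icc (θ / 2) θ := by
  have hcross := cross_sum_eq_of_recurrence (q := fun n => (q n : ℝ)) (r := fun n => (r n : ℝ))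
    (P := fun n => ∏ i ∈ Icc 1 n, t i) (fun n => by simp [hqrec])
    (fun n => prod_Icc_gauss_iterate_eq (a := fun n => (r n : ℝ)) (fun n => (ht n).1.ne') hrt
      (n + 1)) n
  simp only [hq0, hq1, ht1, Nat.cast_zero, Nat.cast_one, zero_mul, one_mul, add_zero,
    Icc_self, prod_singleton] at hcross
  have hle : (q n : ℝ) * ∏ i ∈ Icc 1 (n + 2), t i ≤ q (n + 1) * ∏ i ∈ Icc 1 (n + 1), t i :=
    mul_le_mul (by exact_mod_cast monotone_of_recurrence hq0 hqrec hr n.le_succ)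
      (prod_Icc_one_succ_le ht _) (prod_Icc_one_pos ht _).le (by positivity)
  have hnonneg : 0 ≤ (q n : ℝ) * ∏ i ∈ Icc 1 (n + 2), t i :=
    mul_nonneg (by positivity) (prod_Icc_one_pos ht _).le
  constructor <;> linarith

end GaussMap

theorem stmt17 (θ : ℝ) (hθ : θ ∈ Set.Ioo (0 : ℝ) 1) (hirr : Irrational θ)
    -- Gauss iterates `θ_1 = θ`, `θ_{n+1} = {1/θ_n}`
    (t : ℕ → ℝ) (ht1 : t 1 = θ)
    (htrec : ∀ n, 1 ≤ n → t (n + 1) = Int.fract (1 / t n))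
    -- partial quotients and convergent denominators
    (r : ℕ → ℕ) (hr : ∀ n, 1 ≤ n → r n = ⌊1 / t n⌋₊)
    (q : ℕ → ℕ) (hq0 : q 0 = 0) (hq1 : q 1 = 1)
    (hqrec : ∀ n, 1 ≤ n → q (n + 1) = r (n + 1) * q n + q (n - 1)) :
    -- `B(θ) = ∑_{n≥1} log(q_{n+1})/q_n < ∞  ↔  Φ(θ) = ∑_{n≥1} θ₁⋯θ_{n-1} log(1/θ_n) < ∞`
    Summable (fun n : ℕ => Real.log (q (n + 2)) / (q (n + 1) : ℝ)) ↔
      Summable (fun n : ℕ =>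
        (∏ i ∈ Finset.Icc 1 n, t i) * Real.log (1 / t (n + 1))) := by
  have ht := gauss_iterate_mem_Ioo hθ hirr ht1 htrec
  have hr1 n : 1 ≤ r (n + 2) := one_le_partial_quotient ht hr (n + 1)
  have hqrec' n : q (n + 2) = r (n + 2) * q (n + 1) + q n := hqrec (n + 1) n.succ_pos
  have hbounds := denom_mul_prod_mem_Icc ht1 ht (gauss_iterate_succ_eq ht htrec hr) hq0 hq1
    hqrec' hr1
  refine (summable_log_div_iff_summable_mul_log_div (Q := fun n => (q (n + 1) : ℝ))
    (β := fun n => ∏ i ∈ Icc 1 (n + 1), t i) (c := θ / 2) (half_pos hθ.1) (fun n => ?_)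
    (fun n => ?_) (fun n => prod_Icc_one_pos ht _) (fun n => prod_Icc_one_succ_le ht _)
    (fun n => (hbounds n).1) (fun n => (hbounds n).2.trans hθ.2.le)).trans ?_
  · exact_mod_cast hq1 ▸ monotone_of_recurrence hq0 hqrec' hr1 (by omega : 1 ≤ n + 1)
  · exact_mod_cast two_mul_le_of_recurrence hq0 hqrec' hr1 n
  · refine (Iff.of_eq (congrArg Summable (funext fun n => ?_))).trans (summable_nat_add_iff 1)
    rw [prod_Icc_succ_top (by omega : 1 ≤ n + 2),
      div_mul_cancel_left₀ (prod_Icc_one_pos ht _).ne', one_div]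
end
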